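/- Theorem 1 (formation of cliques): Let G be a connected simple graph on a finite vertex type V with at least two vertices, let I ⊆ V be the set of IC nodes, L : V → V → ℝ a link-cost function and Γ ≥ 1 a real weight. Suppose that L(i,k) < Γ − 1 for all distinct i, k ∈ I. If G is pairwise stable, then the IC nodes form a clique, i.e., every two distinct vertices of I are adjacent in G. -/
import Mathlib


open SimpleGraph
open scoped Classical

noncomputable def bridging {V : Type*} [Fintype V] (G : SimpleGraph V) (i : V) : ℝ :=
  (G.degree i : ℝ)⁻¹ / ∑ j ∈ G.neighborFinset i, (G.degree j : ℝ)⁻¹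

noncomputable def addE {V : Type*} (G : SimpleGraph V) (i k : V) : SimpleGraph V :=
  G ⊔ fromEdgeSet {s(i, k)}

noncomputable def delE {V : Type*} (G : SimpleGraph V) (i k : V) : SimpleGraph V :=
  G.deleteEdges {s(i, k)}

noncomputable def cost {V : Type*} [Fintype V] (G : SimpleGraph V) (I : Set V)
    (L : V → V → ℝ) (Γ : ℝ) (i : V) : ℝ :=
  (∑ z ∈ G.neighborFinset i, L i z) + Γ * (∑ j ∈ I.toFinset, (G.dist i j : ℝ))
    + (∑ k ∈ Iᶜ.toFinset, (G.dist i k : ℝ)) + bridging G i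

def PairwiseStable {V : Type*} [Fintype V] (G : SimpleGraph V) (I : Set V)
    (L : V → V → ℝ) (Γ : ℝ) : Prop :=
  (∀ i j : V, G.Adj i j →
      cost G I L Γ i ≤ cost (delE G i j) I L Γ i ∧
      cost G I L Γ j ≤ cost (delE G i j) I L Γ j) ∧
  (∀ i j : V, i ≠ j → ¬ G.Adj i j →
      ¬ (cost (addE G i j) I L Γ i < cost G I L Γ i ∧
         cost (addE G i j) I L Γ j < cost G I L Γ j))

section Aux
set_option linter.unusedSectionVars false
variable {V : Type*} [Fintype V]

lemma addE_adj (G : SimpleGraph V) {i k : V} (hik : i ≠ k) (a b : V) :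
    (addE G i k).Adj a b ↔ G.Adj a b ∨ (a = i ∧ b = k) ∨ (a = k ∧ b = i) := by
  simp only [addE, sup_adj, fromEdgeSet_adj, Set.mem_singleton_iff, Sym2.eq, Sym2.rel_iff',
    Prod.mk.injEq, Prod.swap_prod_mk]
  constructor
  · rintro (h | ⟨(⟨rfl, rfl⟩|⟨rfl, rfl⟩), hne⟩) <;> tauto
  · rintro (h | ⟨rfl, rfl⟩ | ⟨rfl, rfl⟩) <;> tauto

lemma addE_nbhd (G : SimpleGraph V) {i k : V} (hik : i ≠ k) :
    (addE G i k).neighborFinset i = insert k (G.neighborFinset i) := by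
  ext a
  simp only [mem_neighborFinset, addE_adj G hik, Finset.mem_insert]
  constructor
  · rintro (h | ⟨h1, rfl⟩ | ⟨rfl, h2⟩) <;> tauto
  · rintro (rfl | h) <;> tauto

lemma addE_nbhd_other (G : SimpleGraph V) {i k j : V} (hik : i ≠ k) (hji : j ≠ i) (hjk : j ≠ k) :
    (addE G i k).neighborFinset j = G.neighborFinset j := by
  ext a
  simp only [mem_neighborFinset, addE_adj G hik]
  constructor
  · rintro (h | ⟨rfl, rfl⟩ | ⟨rfl, rfl⟩) <;> tauto
  · tauto

lemma addE_degree_other (G : SimpleGraph V) {i k j : V} (hik : i ≠ k) (hji : j ≠ i) (hjk : j ≠ k) :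
    (addE G i k).degree j = G.degree j := by
  rw [← card_neighborFinset_eq_degree, ← card_neighborFinset_eq_degree,
    addE_nbhd_other G hik hji hjk]

set_option maxHeartbeats 1000000 in
lemma cost_decrease (G : SimpleGraph V) (hG : G.Connected) (hV : 1 < Fintype.card V)
    (I : Set V) (L : V → V → ℝ) (Γ : ℝ) (hΓ : 1 ≤ Γ) {i k : V} (hi : i ∈ I) (hk : k ∈ I)
    (hik : i ≠ k) (hadj : ¬ G.Adj i k) (hLik : L i k < Γ - 1) :
    cost (addE G i k) I L Γ i < cost G I L Γ i := by
  set G' := addE G i k with hG'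
  have hle : G ≤ G' := le_sup_left
  -- every vertex has positive degree
  have degpos : ∀ v : V, 0 < G.degree v := by
    intro v
    rw [G.degree_pos_iff_exists_adj v]
    obtain ⟨w, hw⟩ := Fintype.exists_ne_of_one_lt_card hV v
    have hr := (hG v w).some
    cases hr with
    | nil => exact absurd rfl hw.symm
    | cons h p => exact ⟨_, h⟩
  have hkN : k ∉ G.neighborFinset i := by simp [hadj]
  -- link cost sum
  have hlink : (∑ z ∈ G'.neighborFinset i, L i z)
      = L i k + ∑ z ∈ G.neighborFinset i, L i z := by
    rw [hG', addE_nbhd G hik, Finset.sum_insert hkN]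
  -- distances don't increase
  have hdle : ∀ j : V, (G'.dist i j : ℝ) ≤ G.dist i j := by
    intro j
    exact_mod_cast (hG i j).dist_anti hle
  -- distance to k drops by at least 1
  have hadj' : G'.Adj i k := by
    rw [hG', addE_adj G hik]; tauto
  have hd1 : G'.dist i k = 1 := dist_eq_one_iff_adj.mpr hadj'
  have hd2 : 2 ≤ G.dist i k := by
    have h1 : 0 < G.dist i k := hG.pos_dist_of_ne hik
    have h2 : G.dist i k ≠ 1 := fun h => hadj (dist_eq_one_iff_adj.mp h)
    omega
  -- sum over I drops by ≥ 1
  have hkI : k ∈ I.toFinset := Set.mem_toFinset.mpr hk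
  have hIsum : (∑ j ∈ I.toFinset, (G'.dist i j : ℝ))
      ≤ (∑ j ∈ I.toFinset, (G.dist i j : ℝ)) - 1 := by
    rw [← Finset.add_sum_erase _ _ hkI, ← Finset.add_sum_erase _ _ hkI]
    have h3 : (G'.dist i k : ℝ) ≤ (G.dist i k : ℝ) - 1 := by
      rw [hd1]
      have : (2 : ℝ) ≤ G.dist i k := by exact_mod_cast hd2
      push_cast
      linarith
    have h4 : ∑ j ∈ I.toFinset.erase k, (G'.dist i j : ℝ)
        ≤ ∑ j ∈ I.toFinset.erase k, (G.dist i j : ℝ) :=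
      Finset.sum_le_sum fun j _ => hdle j
    linarith
  have hSsum : (∑ j ∈ Iᶜ.toFinset, (G'.dist i j : ℝ)) ≤ ∑ j ∈ Iᶜ.toFinset, (G.dist i j : ℝ) :=
    Finset.sum_le_sum fun j _ => hdle j
  -- bridging decreases
  have hbr : bridging G' i ≤ bridging G i := by
    unfold bridging
    have hS : (0:ℝ) < ∑ j ∈ G.neighborFinset i, (G.degree j : ℝ)⁻¹ := by
      apply Finset.sum_pos
      · intro j _
        exact inv_pos.mpr (by exact_mod_cast degpos j)
      · rw [← Finset.card_pos, card_neighborFinset_eq_degree]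
        exact degpos i
    have hSeq : ∑ j ∈ G'.neighborFinset i, (G'.degree j : ℝ)⁻¹
        = ((G.degree k + 1 : ℕ) : ℝ)⁻¹ + ∑ j ∈ G.neighborFinset i, (G.degree j : ℝ)⁻¹ := by
      rw [hG', addE_nbhd G hik, Finset.sum_insert hkN]
      congr 1
      · congr 1
        rw [← hG']
        have : G'.degree k = G.degree k + 1 := by
          rw [← card_neighborFinset_eq_degree, ← card_neighborFinset_eq_degree]
          have hnb : G'.neighborFinset k = insert i (G.neighborFinset k) := by
            have : G' = addE G k i := by
              rw [hG', addE, addE, Sym2.eq_swap]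
            rw [this, addE_nbhd G hik.symm]
          rw [hnb, Finset.card_insert_of_notMem (by simp only [mem_neighborFinset]; exact fun h => hadj h.symm)]
        rw [this]
      · apply Finset.sum_congr rfl
        intro j hj
        rw [mem_neighborFinset] at hj
        have hjk : j ≠ k := fun h => hadj (h ▸ hj)
        rw [← hG', addE_degree_other G hik (G.ne_of_adj hj.symm) hjk]
    have hdeg' : G'.degree i = G.degree i + 1 := by
      rw [← card_neighborFinset_eq_degree, ← card_neighborFinset_eq_degree, hG',
        addE_nbhd G hik, Finset.card_insert_of_notMem hkN]
    rw [hSeq, hdeg']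
    apply div_le_div₀ (by positivity)
    · apply inv_anti₀ (by exact_mod_cast degpos i)
      push_cast; linarith
    · exact hS
    · have : (0:ℝ) ≤ ((G.degree k + 1 : ℕ) : ℝ)⁻¹ := by positivity
      linarith
  -- combine
  unfold cost
  have hΓ0 : (0:ℝ) ≤ Γ := by linarith
  have h5 : Γ * (∑ j ∈ I.toFinset, (G'.dist i j : ℝ))
      ≤ Γ * ((∑ j ∈ I.toFinset, (G.dist i j : ℝ)) - 1) :=
    mul_le_mul_of_nonneg_left hIsum hΓ0
  rw [hlink]
  nlinarith [hbr, hSsum, h5]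

end Aux

theorem stmt2 {V : Type*} [Fintype V] (G : SimpleGraph V) (hG : G.Connected)
    (hV : 1 < Fintype.card V) (I : Set V) (L : V → V → ℝ) (Γ : ℝ) (hΓ : 1 ≤ Γ)
    (hL : ∀ i ∈ I, ∀ k ∈ I, i ≠ k → L i k < Γ - 1)
    (hstab : PairwiseStable G I L Γ) :
    ∀ i ∈ I, ∀ k ∈ I, i ≠ k → G.Adj i k := by
  intro i hi k hk hik
  by_contra hadj
  refine hstab.2 i k hik hadj ⟨?_, ?_⟩
  · exact cost_decrease G hG hV I L Γ hΓ hi hk hik hadj (hL i hi k hk hik)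
  · have hsw : addE G i k = addE G k i := by rw [addE, addE, Sym2.eq_swap]
    rw [hsw]
    exact cost_decrease G hG hV I L Γ hΓ hk hi hik.symm (fun h => hadj h.symm)
      (hL k hk i hi hik.symm)
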